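/- arXiv:2506.19148 — 4 statements merged into one kernel-verified Lean document; each statement's English description precedes it below -/
import Mathlib

section
/- Let S be an integral domain and let J ⊆ S be an ideal such that S is J-adically complete (and separated). Suppose f, g ∈ S with f in the J-adic closure of the principal ideal (g), i.e., f ∈ ⋂ₙ ((g) + Jⁿ). Then for every integer k ≥ 1 there exists h ∈ S with g^(k-1) · h = f^k; in particular, if g ≠ 0, then f/g is almost integral over S in S[1/g]. -/
/-- Membership in `J ^ n • ⊤` is membership in `J ^ n`. -/
private lemma mem_smul_top_iff' {S : Type*} [CommRing S] (J : Ideal S) (n : ℕ) (x : S) :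
    x ∈ (J ^ n • ⊤ : Submodule S S) ↔ x ∈ J ^ n := by
  rw [smul_eq_mul, Ideal.mul_top]

/-- Key lemma: if `x` and `y` lie in the `J`-adic closure of `(g)` in a complete domain,
then `x * y = g * z` for some `z` in the closure. -/
private lemma key_mul {S : Type*} [CommRing S] [IsDomain S] (J : Ideal S)
    [IsAdicComplete J S] (g x y : S)
    (hx : ∀ n : ℕ, x ∈ Ideal.span {g} + J ^ n)
    (hy : ∀ n : ℕ, y ∈ Ideal.span {g} + J ^ n) :
    ∃ z : S, x * y = g * z ∧ ∀ n : ℕ, z ∈ Ideal.span {g} + J ^ n := by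
  by_cases hg : g = 0
  · subst hg
    have hx0 : x = 0 := by
      refine IsHausdorff.haus (inferInstance : IsHausdorff J S) x fun n => ?_
      rw [SModEq.sub_mem, sub_zero, mem_smul_top_iff']
      have hb : Ideal.span ({(0 : S)} : Set S) = ⊥ := Ideal.span_singleton_eq_bot.mpr rfl
      have := hx n
      simpa [hb] using this
    exact ⟨0, by simp [hx0], fun n => Submodule.zero_mem _⟩
  · -- decompositions x = g * a n + i n, y = g * b n + j n
    have hdec : ∀ (w : S), (∀ n : ℕ, w ∈ Ideal.span {g} + J ^ n) →
        ∃ a : ℕ → S, ∃ i : ℕ → S, ∀ n, w = g * a n + i n ∧ i n ∈ J ^ n := by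
      intro w hw
      have h : ∀ n : ℕ, ∃ a : S, ∃ i : S, w = g * a + i ∧ i ∈ J ^ n := by
        intro n
        obtain ⟨u, hu, v, hv, huv⟩ := Submodule.mem_sup.mp (hw n)
        rw [Ideal.mem_span_singleton'] at hu
        obtain ⟨a, ha⟩ := hu
        exact ⟨a, v, by rw [← huv, ← ha, mul_comm], hv⟩
      choose a i h1 h2 using h
      exact ⟨a, i, fun n => ⟨h1 n, h2 n⟩⟩
    obtain ⟨a, i, hai⟩ := hdec x hx
    obtain ⟨b, j, hbj⟩ := hdec y hy
    set c : ℕ → S := fun n => g * a n * b n + a n * j n + b n * i n with hc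
    -- c is a Cauchy sequence
    have hxyc : ∀ n, x * y - g * c n = i n * j n := by
      intro n
      rw [(hai n).1, (hbj n).1, hc]
      ring
    have hcauchy : ∀ {m n : ℕ}, m ≤ n → c m ≡ c n [SMOD (J ^ m • ⊤ : Submodule S S)] := by
      intro m n hmn
      rw [SModEq.sub_mem, mem_smul_top_iff']
      have hgc : g * (c m - c n) = g * (i n * (b m - b n) + j m * (a m - a n)) := by
        have h1 : g * c m = x * y - i m * j m := by
          have := hxyc m; linear_combination -this
        have h2 : g * c n = x * y - i n * j n := by
          have := hxyc n; linear_combination -this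
        have hji : i m - i n = g * (a n - a m) := by
          have e1 := (hai m).1; have e2 := (hai n).1; linear_combination e2 - e1
        have hjj : j m - j n = g * (b n - b m) := by
          have e1 := (hbj m).1; have e2 := (hbj n).1; linear_combination e2 - e1
        linear_combination h1 - h2 - i n * hjj - j m * hji
      have heq := mul_left_cancel₀ hg hgc
      rw [heq]
      have him : i n ∈ J ^ m := Ideal.pow_le_pow_right hmn ((hai n).2)
      have hjm : j m ∈ J ^ m := (hbj m).2
      exact Submodule.add_mem _ (Ideal.mul_mem_right _ _ him) (Ideal.mul_mem_right _ _ hjm)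
    obtain ⟨L, hL⟩ := IsPrecomplete.prec (inferInstance : IsPrecomplete J S) @hcauchy
    have hLn : ∀ n, c n - L ∈ J ^ n := by
      intro n
      have := hL n
      rwa [SModEq.sub_mem, mem_smul_top_iff'] at this
    refine ⟨L, ?_, ?_⟩
    · -- x * y = g * L by Hausdorff
      have h0 : x * y - g * L = 0 := by
        refine IsHausdorff.haus (inferInstance : IsHausdorff J S) _ fun n => ?_
        rw [SModEq.sub_mem, sub_zero, mem_smul_top_iff']
        have heq : x * y - g * L = i n * j n + g * (c n - L) := by
          have := hxyc n; linear_combination this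
        rw [heq]
        exact Submodule.add_mem _ (Ideal.mul_mem_right _ _ ((hai n).2))
          (Ideal.mul_mem_left _ _ (hLn n))
      exact sub_eq_zero.mp h0
    · intro n
      have hrw : L = g * (a n * b n) + (a n * j n + b n * i n + (L - c n)) := by
        rw [hc]; ring
      rw [hrw]
      refine Submodule.add_mem _ ?_ ?_
      · exact Submodule.mem_sup_left (Ideal.mem_span_singleton'.mpr ⟨a n * b n, mul_comm _ _⟩)
      · refine Submodule.mem_sup_right ?_
        refine Submodule.add_mem _ (Submodule.add_mem _ ?_ ?_) ?_
        · exact Ideal.mul_mem_left _ _ ((hbj n).2)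
        · exact Ideal.mul_mem_left _ _ ((hai n).2)
        · simpa using Submodule.neg_mem _ (hLn n)

/-- If `S` is a domain that is `J`-adically complete (and separated), and
`f` lies in the `J`-adic closure of the principal ideal `(g)`, then for every `k ≥ 1`
there is `h` with `g^(k-1) * h = f^k`; in particular if `g ≠ 0` then `f/g` is almost
integral over `S` (in the fraction field, where it lives in `S[1/g]`). -/
theorem stmt0 (S : Type*) [CommRing S] [IsDomain S] (J : Ideal S)
    [IsAdicComplete J S] (f g : S)
    (hf : ∀ n : ℕ, f ∈ Ideal.span {g} + J ^ n) :
    (∀ k : ℕ, 1 ≤ k → ∃ h : S, g ^ (k - 1) * h = f ^ k) ∧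
    (g ≠ 0 → ∃ s : S, s ≠ 0 ∧ ∀ n : ℕ, ∃ u : S,
      algebraMap S (FractionRing S) s *
        (algebraMap S (FractionRing S) f / algebraMap S (FractionRing S) g) ^ n =
        algebraMap S (FractionRing S) u) := by
  have main : ∀ k : ℕ, 1 ≤ k → ∃ h : S,
      g ^ (k - 1) * h = f ^ k ∧ ∀ n : ℕ, h ∈ Ideal.span {g} + J ^ n := by
    intro k hk
    induction k, hk using Nat.le_induction with
    | base => exact ⟨f, by simp, hf⟩
    | succ k hk ih =>
      obtain ⟨h, hh, hcl⟩ := ih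
      obtain ⟨z, hz, hzcl⟩ := key_mul J g h f hcl hf
      refine ⟨z, ?_, hzcl⟩
      have hk1 : k - 1 + 1 = k := Nat.succ_pred_eq_of_pos hk
      have hgk : g ^ k = g ^ (k - 1) * g := by rw [← pow_succ, hk1]
      have key : g ^ k * z = f ^ (k + 1) := by
        rw [hgk, mul_assoc, ← hz, ← mul_assoc, hh, ← pow_succ]
      simpa [Nat.add_sub_cancel] using key
  constructor
  · exact fun k hk => (main k hk).imp fun h hh => hh.1
  · intro hg
    refine ⟨g, hg, fun n => ?_⟩
    rcases Nat.eq_zero_or_pos n with hn | hn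
    · exact ⟨g, by simp [hn]⟩
    · obtain ⟨h, hh, -⟩ := main n hn
      refine ⟨h, ?_⟩
      have hginj : algebraMap S (FractionRing S) g ≠ 0 := by
        simpa using (IsFractionRing.to_map_eq_zero_iff (K := FractionRing S)).not.mpr hg
      have hS : g * f ^ n = h * g ^ n := by
        have hk1 : n - 1 + 1 = n := Nat.succ_pred_eq_of_pos hn
        calc g * f ^ n = g * (g ^ (n - 1) * h) := by rw [hh]
          _ = g ^ (n - 1 + 1) * h := by ring
          _ = h * g ^ n := by rw [hk1]; ring
      rw [div_pow, mul_div_assoc', div_eq_iff (pow_ne_zero n hginj), ← map_pow, ← map_pow,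
        ← map_mul, ← map_mul, hS]
end

section
/- Let S be a p-adically complete ring and g ∈ S a nonzerodivisor such that S/gS is p-torsion free. Then S/gS is p-adically separated, i.e., ⋂ₙ (gS + pⁿS) = gS. -/
/-!
Write `x ∈ ⋂ₙ (gS + pⁿS)` as `x = g aₙ + pⁿ bₙ`. Because `S/gS` is `p`-torsion free and `g` is a
nonzerodivisor, `g` stays a nonzerodivisor modulo every `pⁿ`; so `g (aₘ - aₙ) ∈ pᵐS` forces
`aₘ ≡ aₙ mod pᵐ`, the `aₙ` converge to some `a`, and `x - g a ∈ pⁿS` for all `n` gives `x = g a`.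
-/

open Ideal

section

variable {S : Type*} [CommRing S]

theorem pow_dvd_of_pow_dvd_mul {g ϖ : S} (hg : g ∈ nonZeroDivisors S)
    (htf : ∀ h : S, g ∣ ϖ * h → g ∣ h) (n : ℕ) {a : S} (ha : ϖ ^ n ∣ g * a) : ϖ ^ n ∣ a := by
  induction n generalizing a with
  | zero => simp
  | succ n ih =>
    obtain ⟨c, hc⟩ := ha
    obtain ⟨d, hd⟩ := htf (ϖ ^ n * c) ⟨a, by linear_combination -hc⟩
    have ha_eq : a = ϖ * d :=
      (mul_cancel_left_mem_nonZeroDivisors hg).mp (by linear_combination hc + ϖ * hd)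
    obtain ⟨e, rfl⟩ := ih ⟨c, hd.symm⟩
    exact ⟨e, by rw [ha_eq, pow_succ']; ring⟩

theorem iInf_span_singleton_sup_pow_eq {I : Ideal S} [IsAdicComplete I S] {g : S}
    (hreg : ∀ (n : ℕ) (a : S), g * a ∈ I ^ n → a ∈ I ^ n) :
    ⨅ n : ℕ, (span {g} ⊔ I ^ n) = span {g} := by
  refine le_antisymm (fun x hx => ?_) (le_iInf fun _ => le_sup_left)
  have hdec (n : ℕ) : ∃ a, x - g * a ∈ I ^ n := by
    obtain ⟨y, hy, z, hz, rfl⟩ := Submodule.mem_sup.mp (mem_iInf.mp hx n)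
    obtain ⟨a, rfl⟩ := mem_span_singleton'.mp hy
    exact ⟨a, by simpa [mul_comm] using hz⟩
  choose a ha using hdec
  have hcauchy {m n : ℕ} (hmn : m ≤ n) : a m ≡ a n [SMOD I ^ m • (⊤ : Submodule S S)] := by
    refine SModEq.sub_mem.mpr ?_
    simp only [smul_eq_mul, mul_top]
    refine hreg m _ ?_
    have h : g * (a m - a n) = (x - g * a n) - (x - g * a m) := by ring
    rw [h]
    exact sub_mem (pow_le_pow_right hmn (ha n)) (ha m)
  obtain ⟨L, hL⟩ := IsAdicComplete.toIsPrecomplete.prec hcauchy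
  have hx_eq : x = g * L := by
    refine (IsHausdorff.eq_iff_smodEq (I := I)).mpr fun n => SModEq.sub_mem.mpr ?_
    have hLn : a n - L ∈ I ^ n := by simpa using SModEq.sub_mem.mp (hL n)
    have h : x - g * L = (x - g * a n) + g * (a n - L) := by ring
    simpa [h] using add_mem (ha n) (mul_mem_left _ g hLn)
  exact mem_span_singleton'.mpr ⟨L, by rw [hx_eq, mul_comm]⟩

end

theorem stmt5_general (p : ℕ) (S : Type*) [CommRing S]
    [IsAdicComplete (Ideal.span {(p : S)}) S] (g : S)
    (hg : g ∈ nonZeroDivisors S)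
    (htf : ∀ h : S, (p : S) * h ∈ Ideal.span {g} → h ∈ Ideal.span {g}) :
    (⨅ n : ℕ, (Ideal.span {g} + Ideal.span {(p : S) ^ n})) = Ideal.span {g} := by
  simp only [← span_singleton_pow, Submodule.add_eq_sup]
  refine iInf_span_singleton_sup_pow_eq fun n a ha => ?_
  rw [span_singleton_pow, mem_span_singleton] at ha ⊢
  refine pow_dvd_of_pow_dvd_mul hg (fun h hh => ?_) n ha
  simpa only [mem_span_singleton] using htf h (mem_span_singleton.mpr hh)

/-- If `S` is `p`-adically complete, `g` is a nonzerodivisor and `S/gS`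
is `p`-torsion free, then `S/gS` is `p`-adically separated: `⋂ₙ (gS + pⁿS) = gS`. -/
theorem stmt5 (p : ℕ) [Fact p.Prime] (S : Type*) [CommRing S]
    [IsAdicComplete (Ideal.span {(p : S)}) S] (g : S)
    (hg : g ∈ nonZeroDivisors S)
    (htf : ∀ h : S, (p : S) * h ∈ Ideal.span {g} → h ∈ Ideal.span {g}) :
    (⨅ n : ℕ, (Ideal.span {g} + Ideal.span {(p : S) ^ n})) = Ideal.span {g} :=
  stmt5_general p S g hg htf
end

section
/- Let S be a ring with a valuation v, v(p) = 1, and s ∈ S with v(s) = 0. If h is a root of T² + sT + p = 0 in S, then p + sh is a root of T² + (−2p + s²)T + p² = 0; moreover one root of this latter equation has valuation 2 and the other has valuation 0, so h may be chosen so that v(p + sh) = 2. -/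
/-- With `v` a (nonnegative real-valued) valuation, `v p = 1`,
`v s = 0`: any root `h` of `T² + sT + p = 0` gives `p + s·h` a root of
`T² + (−2p + s²)T + p² = 0`; moreover, given the two roots `h₁, h₂` of
`T² + sT + p = 0` (so `h₁ + h₂ = -s`, `h₁h₂ = p`), one of `p + s·h₁`, `p + s·h₂`
has valuation `2` and the other has valuation `0`; so `h` may be chosen with
`v (p + s·h) = 2`. -/
theorem stmt9 (S : Type*) [CommRing S] (v : AddValuation S (WithTop ℝ))
    (hnn : ∀ y : S, 0 ≤ v y) (p s : S) (hvp : v p = 1) (hvs : v s = 0) :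
    (∀ h : S, h ^ 2 + s * h + p = 0 →
      (p + s * h) ^ 2 + (-(2 * p) + s ^ 2) * (p + s * h) + p ^ 2 = 0) ∧
    (∀ h₁ h₂ : S, h₁ ^ 2 + s * h₁ + p = 0 → h₂ ^ 2 + s * h₂ + p = 0 →
      h₁ + h₂ = -s → h₁ * h₂ = p →
      ((v (p + s * h₁) = 2 ∧ v (p + s * h₂) = 0) ∨
       (v (p + s * h₁) = 0 ∧ v (p + s * h₂) = 2))) := by
  constructor
  · intro h hroot
    linear_combination s ^ 2 * hroot
  · intro h₁ h₂ hr₁ hr₂ hsum hprod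
    set a := p + s * h₁ with ha
    set b := p + s * h₂ with hb
    -- product is p²
    have hab : a * b = p ^ 2 := by
      simp only [ha, hb]
      linear_combination p * s * hsum + s ^ 2 * hprod
    have hvab : v a + v b = 2 := by
      have : v (a * b) = v p + v p := by rw [hab, pow_two, v.map_mul]
      rw [v.map_mul] at this
      rw [this, hvp]
      norm_num
    -- sum is 2p - s²
    have habs : a + b = 2 * p - s ^ 2 := by
      simp only [ha, hb]
      linear_combination s * hsum
    have hvs2 : v (s ^ 2) = 0 := by rw [pow_two, v.map_mul, hvs, add_zero]
    have hv2p : (0 : WithTop ℝ) < v (2 * p) := by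
      rw [v.map_mul, hvp]
      calc (0 : WithTop ℝ) < 1 := by norm_num
        _ ≤ v 2 + 1 := le_add_of_nonneg_left (hnn 2)
    have hvsum : v (a + b) = 0 := by
      rw [habs, v.map_sub_eq_of_lt_right (by rw [hvs2]; exact hv2p), hvs2]
    have hmin : min (v a) (v b) ≤ 0 := hvsum ▸ v.map_add a b
    rcases min_le_iff.mp hmin with hle | hle
    · have h0 : v a = 0 := le_antisymm hle (hnn a)
      right
      refine ⟨h0, ?_⟩
      rwa [h0, zero_add] at hvab
    · have h0 : v b = 0 := le_antisymm hle (hnn b)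
      left
      refine ⟨?_, h0⟩
      rwa [h0, add_zero] at hvab
end

section
/- Let R⁺ be an absolutely integrally closed domain (every monic polynomial over R⁺ has a root in R⁺) containing a prime p, and suppose p, x is a regular sequence in R⁺. If g₁ ∈ R⁺ satisfies g₁² + x·g₁ + p² = 0, then g₁ ∉ p·R⁺. -/
open Pointwise

lemma smul_top_eq_span' (R : Type*) [CommRing R] (p : R) :
    (p • (⊤ : Submodule R R)) = Ideal.span {p} := by
  rw [← Submodule.ideal_span_singleton_smul, smul_eq_mul, Ideal.mul_top]

/-- Let `R⁺` be an absolutely integrally closed local domain (every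
monic polynomial has a root) containing the prime `p`, with `p, x` a regular sequence
of elements of the maximal ideal.  If `g₁² + x·g₁ + p² = 0`, then `g₁ ∉ p·R⁺`. -/
theorem stmt10 (p : ℕ) [Fact p.Prime] (Rp : Type*) [CommRing Rp] [IsDomain Rp]
    [IsLocalRing Rp]
    (hroots : ∀ f : Polynomial Rp, f.Monic → ∃ r : Rp, f.eval r = 0)
    (x : Rp) (hpm : (p : Rp) ∈ IsLocalRing.maximalIdeal Rp)
    (hxm : x ∈ IsLocalRing.maximalIdeal Rp)
    (hreg : RingTheory.Sequence.IsRegular Rp [(p : Rp), x])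
    (g₁ : Rp) (hg₁ : g₁ ^ 2 + x * g₁ + (p : Rp) ^ 2 = 0) :
    g₁ ∉ Ideal.span {(p : Rp)} := by
  intro hmem
  have hw : RingTheory.Sequence.IsWeaklyRegular Rp [(p : Rp), x] := hreg.1
  rw [RingTheory.Sequence.isWeaklyRegular_cons_iff] at hw
  obtain ⟨hp, hw2⟩ := hw
  rw [RingTheory.Sequence.isWeaklyRegular_cons_iff] at hw2
  obtain ⟨hx, -⟩ := hw2
  -- p ≠ 0
  have hp0 : (p : Rp) ≠ 0 := by
    intro h
    exact one_ne_zero (hp (show (p : Rp) • (1 : Rp) = (p : Rp) • 0 by simp [h]))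
  obtain ⟨y, hy⟩ := Ideal.mem_span_singleton.mp hmem
  -- divide the relation by p
  have h1 : (p : Rp) * ((p : Rp) * y ^ 2 + x * y + (p : Rp)) = 0 := by
    rw [hy] at hg₁; linear_combination hg₁
  have h2 : (p : Rp) * y ^ 2 + x * y + (p : Rp) = 0 :=
    (mul_eq_zero.mp h1).resolve_left hp0
  -- x * y ∈ p • ⊤, so y ∈ p • ⊤
  have hxy : x * y ∈ ((p : Rp) • ⊤ : Submodule Rp Rp) := by
    rw [smul_top_eq_span', Ideal.mem_span_singleton]
    exact ⟨-(y ^ 2 + 1), by linear_combination h2⟩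
  have hy2 : y ∈ ((p : Rp) • ⊤ : Submodule Rp Rp) := by
    have hq : x • (Submodule.Quotient.mk y : QuotSMulTop (p : Rp) Rp) = x • 0 := by
      rw [smul_zero, ← Submodule.Quotient.mk_smul, Submodule.Quotient.mk_eq_zero,
        smul_eq_mul]
      exact hxy
    have h := hx hq
    rwa [Submodule.Quotient.mk_eq_zero] at h
  rw [smul_top_eq_span', Ideal.mem_span_singleton] at hy2
  obtain ⟨z, hz⟩ := hy2
  -- divide again by p
  have h3 : (p : Rp) * ((p : Rp) ^ 2 * z ^ 2 + x * z + 1) = 0 := by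
    rw [hz] at h2; linear_combination h2
  have h4 : (p : Rp) ^ 2 * z ^ 2 + x * z + 1 = 0 :=
    (mul_eq_zero.mp h3).resolve_left hp0
  -- hence 1 ∈ maximal ideal, contradiction
  have h5 : (1 : Rp) ∈ IsLocalRing.maximalIdeal Rp := by
    have h6 : (1 : Rp) = -((p : Rp) ^ 2 * z ^ 2) - x * z := by linear_combination h4
    rw [h6]
    exact Ideal.sub_mem _ (neg_mem (Ideal.mul_mem_right _ _
      (Ideal.pow_mem_of_mem _ hpm 2 (by norm_num)))) (Ideal.mul_mem_right _ _ hxm)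
  exact (IsLocalRing.maximalIdeal.isMaximal Rp).ne_top (Ideal.eq_top_iff_one _ |>.mpr h5)
end
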